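/- A minimal compact leafwise-Riemannian foliated space (one with no proper nonempty closed saturated subset) is harmonically simple: every continuous leafwise harmonic function on it is constant on every leaf. -/

import Mathlib

/-
A continuous function on the compact space `M` attains its maximum. The pullback of
`f` to the uniformizing disc of a leaf through a maximum point is a harmonic function with an
interior maximum at `0`, hence constant by the strong maximum principle (a harmonic function on
a disc is the real part of a holomorphic `F`, and `‖exp F‖ = exp (Re F)` falls under the maximum
modulus principle). So the set where `f` attains its maximum is closed, nonempty and saturated;
by minimality it is all of `M`.
-/

open Complex Metric Set

noncomputable section

def uD : Set ℂ := Metric.ball 0 1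

/-- Laplacian of a real-valued function on ℂ. -/
def lapR (f : ℂ → ℝ) (z : ℂ) : ℝ :=
  fderiv ℝ (fun w => fderiv ℝ f w 1) z 1 +
    fderiv ℝ (fun w => fderiv ℝ f w Complex.I) z Complex.I

/-- `g` is harmonic on the unit disc (real valued).  Since leaves are 2-dimensional and
harmonicity is conformally invariant in dimension 2, leafwise harmonicity on a foliated
space with leaves uniformized by the disc is expressed by Euclidean harmonicity of the
pullbacks to the disc. -/
def IsHarmRD (g : ℂ → ℝ) : Prop :=
  ContDiffOn ℝ 2 g uD ∧ ∀ z ∈ uD, lapR g z = 0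

section Foliated

variable {M : Type} [TopologicalSpace M]

/-- A set is saturated for the leaf equivalence relation. -/
def Saturated (leafRel : M → M → Prop) (S : Set M) : Prop :=
  ∀ x ∈ S, ∀ y, leafRel x y → y ∈ S

/-- A minimal set of the foliation. -/
def IsMinimalSet (leafRel : M → M → Prop) (S : Set M) : Prop :=
  S.Nonempty ∧ IsClosed S ∧ Saturated leafRel S ∧
    ∀ T ⊆ S, T.Nonempty → IsClosed T → Saturated leafRel T → T = S

/-- The data of covering uniformizations of the leaves: for each `x`, `cover x` maps the
unit disc onto the leaf through `x`, continuously, sending `0` to `x`. -/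
def IsLeafCover (leafRel : M → M → Prop) (cover : M → ℂ → M) : Prop :=
  (∀ x, cover x 0 = x) ∧
  (∀ x, ∀ z ∈ uD, leafRel x (cover x z)) ∧
  (∀ x y, leafRel x y → ∃ z ∈ uD, cover x z = y) ∧
  (∀ x, ContinuousOn (cover x) uD)

/-- `f` is a continuous leafwise harmonic function. -/
def LeafwiseHarmonic (cover : M → ℂ → M) (f : M → ℝ) : Prop :=
  Continuous f ∧ ∀ x, IsHarmRD (fun z => f (cover x z))

end Foliated

open InnerProductSpace Laplacian

theorem lapR_eq_laplacian {g : ℂ → ℝ} {z : ℂ} (hg : ContDiffAt ℝ 2 g z) :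
    lapR g z = Δ g z := by
  have hd : DifferentiableAt ℝ (fderiv ℝ g) z :=
    (hg.fderiv_right (m := 1) (by norm_num)).differentiableAt one_ne_zero
  simp [lapR, laplacian_eq_iteratedFDeriv_complexPlane, iteratedFDeriv_two_apply,
    fderiv_clm_apply hd (differentiableAt_const _)]

theorem IsHarmRD.harmonicOnNhd {g : ℂ → ℝ} (hg : IsHarmRD g) : HarmonicOnNhd g uD := by
  have hC : ∀ w ∈ uD, ContDiffAt ℝ 2 g w := fun w hw => hg.1.contDiffAt (isOpen_ball.mem_nhds hw)
  intro z hz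
  refine ⟨hC z hz, Filter.eventually_of_mem (isOpen_ball.mem_nhds hz) fun w hw => ?_⟩
  rw [← lapR_eq_laplacian (hC w hw), hg.2 w hw]
  rfl

theorem InnerProductSpace.HarmonicOnNhd.eqOn_ball_of_isMaxOn {f : ℂ → ℝ} {c w : ℂ} {R : ℝ}
    (hf : HarmonicOnNhd f (ball c R)) (hw : w ∈ ball c R) (hmax : IsMaxOn f (ball c R) w) :
    EqOn f (fun _ => f w) (ball c R) := by
  obtain ⟨F, hF, hFre⟩ := hf.exists_analyticOnNhd_ball_re_eq
  have hnorm : ∀ z ∈ ball c R, ‖exp (F z)‖ = Real.exp (f z) := fun z hz => by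
    rw [norm_exp, ← hFre hz]
  have hnorm_max : IsMaxOn (norm ∘ fun z => exp (F z)) (ball c R) w := fun z hz => by
    simpa only [mem_ofPred_eq, Function.comp_apply, hnorm z hz, hnorm w hw, Real.exp_le_exp]
      using hmax hz
  have hconst := Complex.norm_eqOn_of_isPreconnected_of_isMaxOn
    (convex_ball c R).isPreconnected isOpen_ball hF.differentiableOn.cexp hw hnorm_max
  intro z hz
  have := hconst hz
  simp only [Function.comp_apply, Function.const_apply, hnorm z hz, hnorm w hw] at this
  exact Real.exp_injective this

section Foliated

variable {M : Type} [TopologicalSpace M] {leafRel : M → M → Prop} {cover : M → ℂ → M}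
  {f : M → ℝ}

theorem LeafwiseHarmonic.eq_of_isMaxOn (hf : LeafwiseHarmonic cover f)
    (hcov : IsLeafCover leafRel cover) {w v : M} (hw : IsMaxOn f univ w) (hwv : leafRel w v) :
    f v = f w := by
  obtain ⟨hcenter, -, hsurj, -⟩ := hcov
  obtain ⟨z, hz, rfl⟩ := hsurj w v hwv
  have hpull_max : IsMaxOn (fun z => f (cover w z)) uD 0 := fun z _ => by
    simpa only [mem_ofPred_eq, hcenter w] using hw (mem_univ (cover w z))
  have := (hf.2 w).harmonicOnNhd.eqOn_ball_of_isMaxOn (mem_ball_self one_pos) hpull_max hz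
  simpa only [hcenter w] using this

theorem LeafwiseHarmonic.saturated_setOf_eq_max (hf : LeafwiseHarmonic cover f)
    (hcov : IsLeafCover leafRel cover) {x₀ : M} (hx₀ : IsMaxOn f univ x₀) :
    Saturated leafRel {w | f w = f x₀} := by
  intro w (hw : f w = f x₀) v hwv
  have hw_max : IsMaxOn f univ w := fun u hu => hw ▸ hx₀ hu
  exact (hf.eq_of_isMaxOn hcov hw_max hwv).trans hw

end Foliated

theorem stmt5_general (M : Type) [TopologicalSpace M] [CompactSpace M]
    (leafRel : M → M → Prop)
    (cover : M → ℂ → M) (hcov : IsLeafCover leafRel cover)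
    (hmin : ∀ S : Set M, IsClosed S → Saturated leafRel S → S.Nonempty → S = Set.univ) :
    ∀ f : M → ℝ, LeafwiseHarmonic cover f →
      ∀ x y, leafRel x y → f x = f y := by
  intro f hf x y _
  obtain ⟨x₀, -, hx₀⟩ := isCompact_univ.exists_isMaxOn ⟨x, trivial⟩ hf.1.continuousOn
  have hmax_set : {w | f w = f x₀} = univ :=
    hmin _ (isClosed_eq hf.1 continuous_const) (hf.saturated_setOf_eq_max hcov hx₀) ⟨x₀, rfl⟩
  have hconst : ∀ w, f w = f x₀ := fun w => (eq_univ_iff_forall.1 hmax_set w :)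
  rw [hconst x, hconst y]

/-- a minimal compact leafwise-Riemannian foliated space (no proper
nonempty closed saturated subset, i.e. every leaf dense) is harmonically simple. -/
theorem stmt5 (M : Type) [TopologicalSpace M] [CompactSpace M]
    (leafRel : M → M → Prop) (hrel : Equivalence leafRel)
    (cover : M → ℂ → M) (hcov : IsLeafCover leafRel cover)
    (hmin : ∀ S : Set M, IsClosed S → Saturated leafRel S → S.Nonempty → S = Set.univ) :
    ∀ f : M → ℝ, LeafwiseHarmonic cover f →
      ∀ x y, leafRel x y → f x = f y :=
  stmt5_general M leafRel cover hcov hmin
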